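/- arXiv:2512.16088 — 2 statements merged into one kernel-verified Lean document; each statement's English description precedes it below -/
import Mathlib

section
/- For every τ in the upper half-plane H, the derivative of the Jacobi theta function θ at v = 0 satisfies the Jacobi identity θ'(0,τ) = π · θ₁(0,τ) · θ₂(0,τ) · θ₃(0,τ). -/
noncomputable section

/-- `qpow τ x = e^{2πiτx}`, so that `qpow τ j = q^j` with `q = e^{2πiτ}`. -/
def qpow (τ x : ℂ) : ℂ := Complex.exp (2 * (Real.pi : ℂ) * Complex.I * τ * x)

/-- Jacobi theta function
`θ(v,τ) = 2 q^{1/8} sin(πv) ∏_{j=1}^∞ (1−q^j)(1−e^{2πiv}q^j)(1−e^{−2πiv}q^j)`. -/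
def jTheta (v τ : ℂ) : ℂ :=
  2 * qpow τ (1/8) * Complex.sin ((Real.pi : ℂ) * v) *
    ∏' j : ℕ, ((1 - qpow τ ((j : ℂ) + 1)) *
      (1 - Complex.exp (2 * (Real.pi : ℂ) * Complex.I * v) * qpow τ ((j : ℂ) + 1)) *
      (1 - Complex.exp (-(2 * (Real.pi : ℂ) * Complex.I * v)) * qpow τ ((j : ℂ) + 1)))

/-- Jacobi theta function
`θ₁(v,τ) = 2 q^{1/8} cos(πv) ∏_{j=1}^∞ (1−q^j)(1+e^{2πiv}q^j)(1+e^{−2πiv}q^j)`. -/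
def jTheta1 (v τ : ℂ) : ℂ :=
  2 * qpow τ (1/8) * Complex.cos ((Real.pi : ℂ) * v) *
    ∏' j : ℕ, ((1 - qpow τ ((j : ℂ) + 1)) *
      (1 + Complex.exp (2 * (Real.pi : ℂ) * Complex.I * v) * qpow τ ((j : ℂ) + 1)) *
      (1 + Complex.exp (-(2 * (Real.pi : ℂ) * Complex.I * v)) * qpow τ ((j : ℂ) + 1)))

/-- Jacobi theta function
`θ₂(v,τ) = ∏_{j=1}^∞ (1−q^j)(1−e^{2πiv}q^{j−1/2})(1−e^{−2πiv}q^{j−1/2})`. -/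
def jTheta2 (v τ : ℂ) : ℂ :=
  ∏' j : ℕ, ((1 - qpow τ ((j : ℂ) + 1)) *
    (1 - Complex.exp (2 * (Real.pi : ℂ) * Complex.I * v) * qpow τ ((j : ℂ) + 1/2)) *
    (1 - Complex.exp (-(2 * (Real.pi : ℂ) * Complex.I * v)) * qpow τ ((j : ℂ) + 1/2)))

/-- Jacobi theta function
`θ₃(v,τ) = ∏_{j=1}^∞ (1−q^j)(1+e^{2πiv}q^{j−1/2})(1+e^{−2πiv}q^{j−1/2})`. -/
def jTheta3 (v τ : ℂ) : ℂ :=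
  ∏' j : ℕ, ((1 - qpow τ ((j : ℂ) + 1)) *
    (1 + Complex.exp (2 * (Real.pi : ℂ) * Complex.I * v) * qpow τ ((j : ℂ) + 1/2)) *
    (1 + Complex.exp (-(2 * (Real.pi : ℂ) * Complex.I * v)) * qpow τ ((j : ℂ) + 1/2)))

/-- `θ'(0,τ) = ∂θ(v,τ)/∂v |_{v=0}`. -/
def jThetaDeriv (τ : ℂ) : ℂ := deriv (fun v => jTheta v τ) 0

end

/-!
In product form `θ(v) = 2 q^{1/8} sin(πv) · (q;q)_∞ (e^{2πiv}q;q)_∞ (e^{-2πiv}q;q)_∞`, and the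
last factor is holomorphic in `v`, so `θ'(0) = 2π q^{1/8} (q;q)_∞³`. Evaluating the other three
products at `v = 0`, the identity reduces to Euler's `∏ (1 + qⁿ) · ∏ (1 - q^{2n-1}) = 1`.
-/

open Complex
open scoped Real

/-- The q-Pochhammer symbol `(zq; q)_∞ = ∏_{n ≥ 1} (1 - z qⁿ)`. -/
noncomputable def qProd (q z : ℂ) : ℂ := ∏' n : ℕ, (1 - z * q ^ (n + 1))

lemma multipliable_one_add_mul_pow (c : ℂ) {x : ℂ} (hx : ‖x‖ < 1) :
    Multipliable fun n : ℕ => 1 + c * x ^ n :=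
  multipliable_one_add_of_summable <| by
    simpa [norm_mul, norm_pow] using (summable_geometric_of_lt_one (norm_nonneg x) hx).mul_left ‖c‖

lemma multipliable_one_add_mul_pow_odd (c : ℂ) {x : ℂ} (hx : ‖x‖ < 1) :
    Multipliable fun n : ℕ => 1 + c * x ^ (2 * n + 1) := by
  have hx2 : ‖x ^ 2‖ < 1 := by
    rw [norm_pow]
    exact pow_lt_one₀ (norm_nonneg x) hx two_ne_zero
  convert multipliable_one_add_mul_pow (c * x) hx2 using 2 with n
  ring

lemma Multipliable.tprod_mul_mul {α ι : Type*} [CommMonoid α] [TopologicalSpace α]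
    [ContinuousMul α] [T2Space α] {f g h : ι → α} (hf : Multipliable f) (hg : Multipliable g)
    (hh : Multipliable h) : ∏' i, f i * g i * h i = (∏' i, f i) * (∏' i, g i) * ∏' i, h i := by
  rw [(hf.mul hg).tprod_mul hh, hf.tprod_mul hg]

lemma tprod_one_sub_pow_odd_mul_tprod_one_add_pow_odd {r : ℂ} (hr : ‖r‖ < 1) :
    (∏' n : ℕ, (1 - r ^ (2 * n + 1))) * ∏' n : ℕ, (1 + r ^ (2 * n + 1)) =
      ∏' n : ℕ, (1 - (r ^ 2) ^ (2 * n + 1)) := by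
  rw [← Multipliable.tprod_mul
    (by simpa [sub_eq_add_neg] using multipliable_one_add_mul_pow_odd (-1) hr)
    (by simpa using multipliable_one_add_mul_pow_odd 1 hr)]
  exact tprod_congr fun n => by ring

section qProd

variable {q : ℂ}

lemma multipliable_one_sub_mul_pow_succ (z : ℂ) (hq : ‖q‖ < 1) :
    Multipliable fun n : ℕ => 1 - z * q ^ (n + 1) := by
  simpa [pow_succ', sub_eq_add_neg, mul_assoc] using multipliable_one_add_mul_pow (-(z * q)) hq

lemma hasProdLocallyUniformlyOn_qProd (hq : ‖q‖ < 1) :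
    HasProdLocallyUniformlyOn (fun n z => 1 - z * q ^ (n + 1)) (qProd q) Set.univ := by
  unfold qProd
  simp_rw [sub_eq_add_neg]
  refine hasProdLocallyUniformlyOn_of_forall_compact isOpen_univ fun K _ hK => ?_
  obtain ⟨R, hR⟩ := hK.isBounded.exists_norm_le
  refine Summable.hasProdUniformlyOn_nat_one_add hK
    ((summable_geometric_of_lt_one (norm_nonneg q) hq).mul_left (R * ‖q‖))
    (.of_forall fun n z hz => ?_) fun _ => by fun_prop
  rw [norm_neg, norm_mul, norm_pow, pow_succ', ← mul_assoc]
  gcongr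
  exact hR z hz

lemma differentiable_qProd (hq : ‖q‖ < 1) : Differentiable ℂ (qProd q) := by
  rw [← differentiableOn_univ]
  exact (hasProdLocallyUniformlyOn_qProd hq).differentiableOn
    (.of_forall fun _ => by simpa [Finset.prod_fn] using
      DifferentiableOn.finsetProd fun _ _ => by fun_prop) isOpen_univ

lemma qProd_one_ne_zero (hq : ‖q‖ < 1) : qProd q 1 ≠ 0 := by
  have hsum : Summable fun n : ℕ => ‖-q ^ (n + 1)‖ := by
    simpa [norm_pow] using
      (summable_nat_add_iff 1).mpr (summable_geometric_of_lt_one (norm_nonneg q) hq)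
  have hfactor (n : ℕ) : 1 + -q ^ (n + 1) ≠ 0 := by
    rw [← sub_eq_add_neg, sub_ne_zero]
    intro h
    have := congrArg norm h
    rw [norm_one, norm_pow] at this
    exact (pow_lt_one₀ (norm_nonneg q) hq n.succ_ne_zero).ne this.symm
  simpa [qProd, sub_eq_add_neg] using tprod_one_add_ne_zero_of_summable hfactor hsum

/-- Euler: `∏ (1 + qⁿ) = ∏ (1 - q²ⁿ) / ∏ (1 - qⁿ)`, and splitting `∏ (1 - qⁿ)` by the parity
of `n` leaves `1 / ∏ (1 - q^{2n-1})`. -/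
lemma qProd_neg_one_mul_tprod_one_sub_pow_odd (hq : ‖q‖ < 1) :
    qProd q (-1) * ∏' n : ℕ, (1 - q ^ (2 * n + 1)) = 1 := by
  have hq2 : ‖q ^ 2‖ < 1 := by
    rw [norm_pow]
    exact pow_lt_one₀ (norm_nonneg q) hq two_ne_zero
  have hodd : Multipliable fun n : ℕ => 1 - q ^ (2 * n + 1) := by
    simpa [sub_eq_add_neg] using multipliable_one_add_mul_pow_odd (-1) hq
  have hsplit : (∏' n : ℕ, (1 - q ^ (2 * n + 1))) * qProd (q ^ 2) 1 = qProd q 1 := by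
    convert tprod_even_mul_odd (f := fun k => 1 - 1 * q ^ (k + 1)) (by simpa using hodd)
      (by simpa [← pow_mul, mul_add] using multipliable_one_sub_mul_pow_succ 1 hq2) using 2
    · simp
    · simp [qProd, ← pow_mul, mul_add]
    · rfl
  have hsquares : qProd q 1 * qProd q (-1) = qProd (q ^ 2) 1 := by
    rw [qProd, qProd, qProd, ← (multipliable_one_sub_mul_pow_succ 1 hq).tprod_mul
      (multipliable_one_sub_mul_pow_succ (-1) hq)]
    exact tprod_congr fun n => by ring
  apply mul_left_cancel₀ (qProd_one_ne_zero hq)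
  calc qProd q 1 * (qProd q (-1) * ∏' n : ℕ, (1 - q ^ (2 * n + 1)))
      = (qProd q 1 * qProd q (-1)) * ∏' n : ℕ, (1 - q ^ (2 * n + 1)) := by ring
    _ = qProd q 1 * 1 := by rw [hsquares, ← hsplit]; ring

end qProd

lemma qpow_natCast_mul (τ x : ℂ) (n : ℕ) : qpow τ (n * x) = qpow τ x ^ n := by
  rw [qpow, qpow, ← Complex.exp_nat_mul]
  ring_nf

lemma qpow_natCast_add_one (τ : ℂ) (n : ℕ) : qpow τ (n + 1) = qpow τ 1 ^ (n + 1) := by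
  rw [← qpow_natCast_mul]
  push_cast
  ring_nf

lemma qpow_natCast_add_half (τ : ℂ) (n : ℕ) :
    qpow τ (n + 1 / 2) = qpow τ (1 / 2) ^ (2 * n + 1) := by
  rw [← qpow_natCast_mul]
  push_cast
  ring_nf

lemma qpow_half_sq (τ : ℂ) : qpow τ (1 / 2) ^ 2 = qpow τ 1 := by
  rw [← qpow_natCast_mul]
  norm_num

section theta

variable {τ : ℂ}

lemma norm_qpow_lt_one (hτ : 0 < τ.im) {x : ℝ} (hx : 0 < x) : ‖qpow τ x‖ < 1 := by
  rw [qpow, Complex.norm_exp, Real.exp_lt_one_iff]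
  have : (2 * (π : ℂ) * I * τ * x).re = -(2 * π * τ.im * x) := by
    simp [Complex.mul_re, Complex.mul_im]
  rw [this]
  nlinarith [Real.pi_pos, mul_pos hτ hx]

lemma norm_qpow_one_lt_one (hτ : 0 < τ.im) : ‖qpow τ 1‖ < 1 := by
  simpa using norm_qpow_lt_one hτ one_pos

lemma norm_qpow_half_lt_one (hτ : 0 < τ.im) : ‖qpow τ (1 / 2)‖ < 1 := by
  simpa using norm_qpow_lt_one hτ one_half_pos

lemma jTheta_eq_qProd (hτ : 0 < τ.im) (v : ℂ) :
    jTheta v τ = 2 * qpow τ (1 / 8) * sin (π * v) *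
      (qProd (qpow τ 1) 1 * qProd (qpow τ 1) (cexp (2 * π * I * v)) *
        qProd (qpow τ 1) (cexp (-(2 * π * I * v)))) := by
  have hq := norm_qpow_one_lt_one hτ
  rw [jTheta, qProd, qProd, qProd, ← Multipliable.tprod_mul_mul
    (multipliable_one_sub_mul_pow_succ _ hq) (multipliable_one_sub_mul_pow_succ _ hq)
    (multipliable_one_sub_mul_pow_succ _ hq)]
  simp only [qpow_natCast_add_one, one_mul]

lemma hasDerivAt_jTheta_zero (hτ : 0 < τ.im) :
    HasDerivAt (fun v => jTheta v τ) (2 * qpow τ (1 / 8) * π * qProd (qpow τ 1) 1 ^ 3) 0 := by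
  have hsin : HasDerivAt (fun v => 2 * qpow τ (1 / 8) * sin (π * v))
      (2 * qpow τ (1 / 8) * π) 0 := by
    simpa using (((hasDerivAt_id (0 : ℂ)).const_mul (π : ℂ)).csin).const_mul (2 * qpow τ (1 / 8))
  have hprod : DifferentiableAt ℂ (fun v => qProd (qpow τ 1) 1 *
      qProd (qpow τ 1) (cexp (2 * π * I * v)) * qProd (qpow τ 1) (cexp (-(2 * π * I * v)))) 0 := by
    have := differentiable_qProd (norm_qpow_one_lt_one hτ)
    fun_prop
  rw [funext (jTheta_eq_qProd hτ)]
  refine (hsin.mul hprod.hasDerivAt).congr_deriv ?_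
  simp only [mul_zero, neg_zero, Complex.exp_zero, Complex.sin_zero]
  ring

lemma jTheta1_zero (hτ : 0 < τ.im) :
    jTheta1 0 τ = 2 * qpow τ (1 / 8) *
      (qProd (qpow τ 1) 1 * qProd (qpow τ 1) (-1) * qProd (qpow τ 1) (-1)) := by
  have hq := norm_qpow_one_lt_one hτ
  rw [jTheta1, qProd, qProd, ← Multipliable.tprod_mul_mul
    (multipliable_one_sub_mul_pow_succ _ hq) (multipliable_one_sub_mul_pow_succ _ hq)
    (multipliable_one_sub_mul_pow_succ _ hq)]
  simp [qpow_natCast_add_one, sub_eq_add_neg]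

lemma jTheta2_zero (hτ : 0 < τ.im) :
    jTheta2 0 τ = qProd (qpow τ 1) 1 * (∏' n : ℕ, (1 - qpow τ (1 / 2) ^ (2 * n + 1))) ^ 2 := by
  have hodd : Multipliable fun n : ℕ => 1 - qpow τ (1 / 2) ^ (2 * n + 1) := by
    simpa [sub_eq_add_neg] using multipliable_one_add_mul_pow_odd (-1) (norm_qpow_half_lt_one hτ)
  rw [jTheta2, qProd, sq, ← mul_assoc, ← Multipliable.tprod_mul_mul
    (multipliable_one_sub_mul_pow_succ _ (norm_qpow_one_lt_one hτ)) hodd hodd]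
  simp only [mul_zero, neg_zero, Complex.exp_zero, one_mul, qpow_natCast_add_one,
    qpow_natCast_add_half]

lemma jTheta3_zero (hτ : 0 < τ.im) :
    jTheta3 0 τ = qProd (qpow τ 1) 1 * (∏' n : ℕ, (1 + qpow τ (1 / 2) ^ (2 * n + 1))) ^ 2 := by
  have hodd : Multipliable fun n : ℕ => 1 + qpow τ (1 / 2) ^ (2 * n + 1) := by
    simpa using multipliable_one_add_mul_pow_odd 1 (norm_qpow_half_lt_one hτ)
  rw [jTheta3, qProd, sq, ← mul_assoc, ← Multipliable.tprod_mul_mul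
    (multipliable_one_sub_mul_pow_succ _ (norm_qpow_one_lt_one hτ)) hodd hodd]
  simp only [mul_zero, neg_zero, Complex.exp_zero, one_mul, qpow_natCast_add_one,
    qpow_natCast_add_half]

lemma jTheta2_zero_mul_jTheta3_zero (hτ : 0 < τ.im) :
    jTheta2 0 τ * jTheta3 0 τ =
      (qProd (qpow τ 1) 1 * ∏' n : ℕ, (1 - qpow τ 1 ^ (2 * n + 1))) ^ 2 := by
  rw [jTheta2_zero hτ, jTheta3_zero hτ, ← qpow_half_sq,
    ← tprod_one_sub_pow_odd_mul_tprod_one_add_pow_odd (norm_qpow_half_lt_one hτ), qpow_half_sq]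
  ring

end theta

theorem jacobi_identity (τ : ℂ) (hτ : 0 < τ.im) :
    jThetaDeriv τ = (Real.pi : ℂ) * jTheta1 0 τ * jTheta2 0 τ * jTheta3 0 τ := by
  have heuler := qProd_neg_one_mul_tprod_one_sub_pow_odd (norm_qpow_one_lt_one hτ)
  rw [jThetaDeriv, (hasDerivAt_jTheta_zero hτ).deriv, jTheta1_zero hτ, mul_assoc _ (jTheta2 0 τ),
    jTheta2_zero_mul_jTheta3_zero hτ]
  set q := qpow τ 1
  set oddProd := ∏' n : ℕ, (1 - q ^ (2 * n + 1))
  linear_combination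
    (-(2 * qpow τ (1 / 8) * π * qProd q 1 ^ 3) * (qProd q (-1) * oddProd + 1)) * heuler
end

section
/- For every τ in the upper half-plane H and every t ∈ ℂ, the theta function θ satisfies the modular S-transformation law θ(t/τ, −1/τ) = (1/i) · √(τ/i) · e^{πit²/τ} · θ(t,τ), where √(τ/i) denotes the principal branch of the square root (well defined since Re(τ/i) > 0 for τ ∈ H). -/
/-!
Up to an elementary factor, `jTheta` is Mathlib's `jacobiTheta₂` evaluated at a half-period shift:
`θ(v, τ) = -i e^{πiτ/4 + πiv} θ₂(v + (1 + τ)/2, τ)`. This is the Jacobi triple product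
`θ₂(w, τ) = ∏ (1 - p^{2k+2}) (1 + z p^{2k+1}) (1 + z⁻¹ p^{2k+1})`, `p = e^{πiτ}`, `z = e^{2πiw}`,
after which the S-law is Mathlib's functional equation of `θ₂` together with `θ₂(w + 1) = θ₂(w)`.

The triple product is the limit `m → ∞` of Cauchy's identity
`∏_{k<m} (1 + z p^{2k+1}) (1 + z⁻¹ p^{2k+1}) = ∑_{|r| ≤ m} [2m, m+r]_{p²} p^{r²} z^r`,
which is Gauss's `q`-binomial theorem after a substitution. Since
`[a + b, a]_q = (q;q)_{a+b} / ((q;q)_a (q;q)_b)` with `(q;q)_n → ∏ (1 - q^{n+1}) ≠ 0`, the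
coefficients are uniformly bounded and tend to `1 / ∏ (1 - q^{n+1})`, so Tannery's theorem
(dominated convergence for series) applies.
-/

open Finset

section QBinomial

variable {R : Type*} [CommRing R]

/-- The Gaussian binomial coefficient `[m, k]_q`, through the `q`-Pascal rule. -/
def qBinom (q : R) : ℕ → ℕ → R
  | _, 0 => 1
  | 0, _ + 1 => 0
  | m + 1, k + 1 => qBinom q m k + q ^ (k + 1) * qBinom q m (k + 1)

/-- The `q`-Pochhammer symbol `(q;q)_n`. -/
def qPoch (q : R) (n : ℕ) : R := ∏ i ∈ range n, (1 - q ^ (i + 1))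

variable (q : R)

@[simp] lemma qBinom_zero_right (m : ℕ) : qBinom q m 0 = 1 := by cases m <;> rfl

lemma qBinom_succ_succ (m k : ℕ) :
    qBinom q (m + 1) (k + 1) = qBinom q m k + q ^ (k + 1) * qBinom q m (k + 1) := rfl

lemma qBinom_eq_zero_of_lt {m k : ℕ} (h : m < k) : qBinom q m k = 0 := by
  induction m generalizing k with
  | zero => obtain ⟨k, rfl⟩ := Nat.exists_eq_succ_of_ne_zero h.ne'; rfl
  | succ m ih =>
    obtain ⟨k, rfl⟩ := Nat.exists_eq_succ_of_ne_zero (Nat.ne_zero_of_lt h)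
    rw [qBinom_succ_succ, ih (by omega), ih (by omega), mul_zero, add_zero]

@[simp] lemma qBinom_self (m : ℕ) : qBinom q m m = 1 := by
  induction m with
  | zero => rfl
  | succ m ih => rw [qBinom_succ_succ, ih, qBinom_eq_zero_of_lt q (Nat.lt_succ_self m), mul_zero,
      add_zero]

@[simp] lemma qPoch_zero : qPoch q 0 = 1 := prod_range_zero _

lemma qPoch_succ (n : ℕ) : qPoch q (n + 1) = qPoch q n * (1 - q ^ (n + 1)) := prod_range_succ _ _

lemma qPoch_mul_qPoch_mul_qBinom (a b : ℕ) :
    qPoch q a * qPoch q b * qBinom q (a + b) a = qPoch q (a + b) := by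
  induction a generalizing b with
  | zero => simp
  | succ a iha =>
    induction b with
    | zero => simp
    | succ b ihb =>
      have hb := iha (b + 1)
      rw [← add_assoc] at hb
      rw [show a + 1 + b = a + b + 1 by ring] at ihb
      rw [show a + 1 + (b + 1) = a + b + 1 + 1 by ring, qBinom_succ_succ, qPoch_succ q (a + b + 1)]
      rw [qPoch_succ q a] at ihb ⊢
      rw [qPoch_succ q b] at hb ⊢
      linear_combination (1 - q ^ (a + 1)) * hb + q ^ (a + 1) * (1 - q ^ (b + 1)) * ihb

/-- Gauss's `q`-binomial theorem. -/
theorem prod_one_add_mul_pow_eq_sum (y : R) (m : ℕ) :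
    ∏ j ∈ range m, (1 + y * q ^ j) =
      ∑ n ∈ range (m + 1), qBinom q m n * q ^ n.choose 2 * y ^ n := by
  induction m generalizing y with
  | zero => simp
  | succ m ih =>
    -- Expand `(1 + y) ∏_{j<m} (1 + (y q) q ^ j)`; by `q`-Pascal the coefficient of `y ^ (n + 1)`
    -- on the right is `y * a n + a (n + 1)`.
    set a : ℕ → R := fun n ↦ qBinom q m n * q ^ n.choose 2 * (y * q) ^ n with ha
    have hterm (n : ℕ) : qBinom q (m + 1) (n + 1) * q ^ (n + 1).choose 2 * y ^ (n + 1) =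
        y * a n + a (n + 1) := by
      simp only [ha, qBinom_succ_succ, Nat.choose_succ_succ', Nat.choose_one_right]
      ring
    have ha0 : a 0 = 1 := by simp [ha]
    have hlast : a (m + 1) = 0 := by simp [ha, qBinom_eq_zero_of_lt q (Nat.lt_succ_self m)]
    have hprod : ∏ j ∈ range (m + 1), (1 + y * q ^ j) = (∑ n ∈ range (m + 1), a n) * (1 + y) := by
      rw [prod_range_succ', ← ih]
      simp only [pow_succ', pow_zero, mul_one, mul_assoc]
    rw [hprod, sum_range_succ' (fun n ↦ qBinom q (m + 1) n * q ^ n.choose 2 * y ^ n),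
      sum_congr rfl fun n _ ↦ hterm n, sum_add_distrib, ← mul_sum, sum_range_succ' a,
      sum_range_succ (fun n ↦ a (n + 1)), hlast, ha0, qBinom_zero_right,
      Nat.choose_zero_succ, pow_zero]
    ring

end QBinomial

lemma two_mul_choose_two_add_self (n : ℕ) : 2 * n.choose 2 + n = n ^ 2 := by
  induction n with
  | zero => rfl
  | succ n ih => rw [Nat.choose_succ_succ', Nat.choose_one_right]; linear_combination ih

section Field

variable {K : Type*} [Field K]

lemma prod_range_mul_inv_pow_odd (z p : K) (m : ℕ) :
    ∏ k ∈ range m, (z * (p ^ (2 * k + 1))⁻¹) = z ^ m * (p ^ (m ^ 2))⁻¹ := by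
  induction m with
  | zero => simp
  | succ m ih =>
    rw [prod_range_succ, ih, show (m + 1) ^ 2 = m ^ 2 + (2 * m + 1) by ring, pow_add, pow_add,
      mul_inv]
    ring

/-- Cauchy's finite form of the Jacobi triple product. -/
theorem prod_one_add_mul_pow_odd_mul_inv_eq_sum {p z : K} (hp : p ≠ 0) (hz : z ≠ 0) (m : ℕ) :
    ∏ k ∈ range m, ((1 + z * p ^ (2 * k + 1)) * (1 + z⁻¹ * p ^ (2 * k + 1))) =
      ∑ r ∈ Icc (-(m : ℤ)) m, qBinom (p ^ 2) (2 * m) (r + m).toNat * (p ^ (r ^ 2) * z ^ r) := by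
  have hpow (a : ℤ) (N : ℕ) : p ^ a * (p ^ 2) ^ N = p ^ (a + 2 * N) := by
    rw [zpow_add₀ hp, ← pow_mul, ← zpow_natCast]; push_cast; rfl
  -- Gauss's theorem for `q = p ^ 2`, `y = z p ^ (1 - 2m)`: the lower half of its factors are
  -- `z p ^ (-(2k+1)) (1 + z⁻¹ p ^ (2k+1))`, the upper half are `1 + z p ^ (2k+1)`.
  set y := z * p ^ (1 - 2 * m : ℤ)
  set c := z ^ m * (p ^ (m ^ 2))⁻¹
  have hc : c ≠ 0 := by positivity
  have hlhs : ∏ j ∈ range (2 * m), (1 + y * (p ^ 2) ^ j) =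
      c * ∏ k ∈ range m, ((1 + z * p ^ (2 * k + 1)) * (1 + z⁻¹ * p ^ (2 * k + 1))) := by
    have hlow (k : ℕ) (hk : k < m) : 1 + y * (p ^ 2) ^ (m - 1 - k) =
        z * (p ^ (2 * k + 1))⁻¹ * (1 + z⁻¹ * p ^ (2 * k + 1)) := by
      rw [mul_assoc, hpow, show 1 - 2 * (m : ℤ) + 2 * ((m - 1 - k : ℕ) : ℤ) = -((2 * k + 1 : ℕ) : ℤ)
        by omega, zpow_neg, zpow_natCast]
      field_simp
      ring
    have hhigh (k : ℕ) : 1 + y * (p ^ 2) ^ (m + k) = 1 + z * p ^ (2 * k + 1) := by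
      rw [mul_assoc, hpow, show 1 - 2 * (m : ℤ) + 2 * ((m + k : ℕ) : ℤ) = ((2 * k + 1 : ℕ) : ℤ)
        by omega, zpow_natCast]
    rw [two_mul, prod_range_add, ← prod_range_reflect _ m, prod_congr rfl fun k hk ↦
      hlow k (mem_range.1 hk), prod_congr rfl fun k _ ↦ hhigh k, prod_mul_distrib,
      prod_range_mul_inv_pow_odd, prod_mul_distrib]
    ring
  have hterm (n : ℕ) : (p ^ 2) ^ n.choose 2 * y ^ n =
      c * (p ^ (((n : ℤ) - m) ^ 2) * z ^ ((n : ℤ) - m)) := by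
    have hexp :
        ((2 * n.choose 2 : ℕ) : ℤ) + (1 - 2 * m) * n = -(m ^ 2 : ℕ) + ((n : ℤ) - m) ^ 2 := by
      have := congrArg (fun k : ℕ ↦ (k : ℤ)) (two_mul_choose_two_add_self n)
      push_cast at this ⊢
      linear_combination this
    have hp_part : (p ^ 2) ^ n.choose 2 * (p ^ (1 - 2 * m : ℤ)) ^ n =
        (p ^ (m ^ 2))⁻¹ * p ^ (((n : ℤ) - m) ^ 2) := by
      rw [← pow_mul, ← zpow_natCast, ← zpow_natCast (p ^ _), ← zpow_mul, ← zpow_add₀ hp,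
        ← zpow_natCast p (m ^ 2), ← zpow_neg, ← zpow_add₀ hp, hexp]
    have hz_part : z ^ n = z ^ m * z ^ ((n : ℤ) - m) := by
      rw [zpow_sub₀ hz, zpow_natCast, zpow_natCast]
      field_simp
    simp only [y, c, mul_pow]
    rw [hz_part]
    linear_combination (z ^ m * z ^ ((n : ℤ) - m)) * hp_part
  have hrhs : ∑ n ∈ range (2 * m + 1), qBinom (p ^ 2) (2 * m) n * (p ^ 2) ^ n.choose 2 * y ^ n =
      c * ∑ r ∈ Icc (-(m : ℤ)) m, qBinom (p ^ 2) (2 * m) (r + m).toNat * (p ^ (r ^ 2) * z ^ r) := by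
    rw [mul_sum]
    refine sum_nbij' (fun n ↦ (n : ℤ) - m) (fun r ↦ (r + m).toNat) (fun n hn ↦ ?_)
      (fun r hr ↦ ?_) (fun n _ ↦ by simp) (fun r hr ↦ ?_) fun n _ ↦ ?_
    · rw [mem_range] at hn; rw [mem_Icc]; omega
    · rw [mem_Icc] at hr; rw [mem_range]; omega
    · rw [mem_Icc] at hr; omega
    · rw [sub_add_cancel, Int.toNat_natCast, mul_assoc, hterm]
      ring
  exact mul_left_cancel₀ hc (hlhs.symm.trans
    ((prod_one_add_mul_pow_eq_sum (p ^ 2) y (2 * m)).trans hrhs))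

end Field

lemma tprod_mul_mul_eq_mul_tprod_shift {M : Type*} [CommMonoid M] [TopologicalSpace M]
    [ContinuousMul M] [T2Space M] {f g h : ℕ → M} (hf : Multipliable f) (hg : Multipliable g)
    (hh : Multipliable fun k ↦ h (k + 1)) :
    ∏' k, f k * g k * h k = h 0 * ∏' k, f k * g k * h (k + 1) := by
  have hh₀ : Multipliable h := by
    simpa only [Finset.prod_range_one] using (hh.hasProd.prod_range_mul (k := 1)).multipliable
  rw [(hf.mul hg).tprod_mul hh₀, (hf.mul hg).tprod_mul hh, tprod_eq_zero_mul' hh, mul_left_comm]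

section Analytic

open Complex Filter Topology

variable {q : ℂ}

lemma multipliable_one_add_mul_pow_s8 (hq : ‖q‖ < 1) (c : ℂ) :
    Multipliable fun k : ℕ ↦ 1 + c * q ^ k :=
  multipliable_one_add_of_summable <| by
    simpa only [norm_mul, norm_pow] using
      (summable_geometric_of_lt_one (norm_nonneg q) hq).mul_left ‖c‖

lemma one_sub_pow_succ_ne_zero (hq : ‖q‖ < 1) (n : ℕ) : 1 - q ^ (n + 1) ≠ 0 := by
  refine sub_ne_zero.2 fun h ↦ ?_
  have : ‖q‖ ^ (n + 1) < 1 := pow_lt_one₀ (norm_nonneg q) hq n.succ_ne_zero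
  rw [← norm_pow, ← h, norm_one] at this
  exact this.false

lemma qPoch_ne_zero (hq : ‖q‖ < 1) (n : ℕ) : qPoch q n ≠ 0 :=
  prod_ne_zero_iff.2 fun i _ ↦ one_sub_pow_succ_ne_zero hq i

lemma tendsto_qPoch (hq : ‖q‖ < 1) :
    Tendsto (qPoch q) atTop (𝓝 (∏' n, (1 - q ^ (n + 1)))) :=
  (ModularForm.multipliable_one_sub_pow hq).hasProd.tendsto_prod_nat

lemma tprod_one_sub_pow_succ_ne_zero (hq : ‖q‖ < 1) : ∏' n, (1 - q ^ (n + 1)) ≠ 0 := by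
  have hne := tprod_one_add_ne_zero_of_summable (f := fun n ↦ -q ^ (n + 1))
    (fun n ↦ by rw [← sub_eq_add_neg]; exact one_sub_pow_succ_ne_zero hq n) <| by
      simpa only [norm_neg, norm_pow] using
        (summable_nat_add_iff 1).2 (summable_geometric_of_lt_one (norm_nonneg q) hq)
  simpa only [← sub_eq_add_neg] using hne

lemma qBinom_add_left_eq_div (hq : ‖q‖ < 1) (a b : ℕ) :
    qBinom q (a + b) a = qPoch q (a + b) / (qPoch q a * qPoch q b) := by
  rw [eq_div_iff (mul_ne_zero (qPoch_ne_zero hq a) (qPoch_ne_zero hq b)), mul_comm,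
    qPoch_mul_qPoch_mul_qBinom]

lemma exists_norm_qBinom_le (hq : ‖q‖ < 1) : ∃ C, ∀ m n, ‖qBinom q m n‖ ≤ C := by
  obtain ⟨A, hA⟩ := isBounded_iff_forall_norm_le.1
    (Metric.isBounded_range_of_tendsto _ (tendsto_qPoch hq))
  obtain ⟨B, hB⟩ := isBounded_iff_forall_norm_le.1
    (Metric.isBounded_range_of_tendsto _ ((tendsto_qPoch hq).inv₀
      (tprod_one_sub_pow_succ_ne_zero hq)))
  have hA' (n : ℕ) : ‖qPoch q n‖ ≤ A := hA _ ⟨n, rfl⟩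
  have hB' (n : ℕ) : ‖(qPoch q n)⁻¹‖ ≤ B := hB _ ⟨n, rfl⟩
  have hA0 : 0 ≤ A := (norm_nonneg _).trans (hA' 0)
  have hB0 : 0 ≤ B := (norm_nonneg _).trans (hB' 0)
  refine ⟨A * (B * B), fun m n ↦ ?_⟩
  rcases le_or_gt n m with hnm | hmn
  · obtain ⟨b, rfl⟩ := Nat.exists_eq_add_of_le hnm
    rw [qBinom_add_left_eq_div hq, div_eq_mul_inv, mul_inv, norm_mul, norm_mul]
    exact mul_le_mul (hA' _) (mul_le_mul (hB' n) (hB' b) (norm_nonneg _) hB0) (by positivity) hA0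
  · rw [qBinom_eq_zero_of_lt q hmn, norm_zero]
    positivity

lemma tendsto_qBinom_two_mul (hq : ‖q‖ < 1) (r : ℤ) :
    Tendsto (fun m : ℕ ↦ qBinom q (2 * m) (r + m).toNat) atTop
      (𝓝 (∏' n, (1 - q ^ (n + 1)))⁻¹) := by
  set P := ∏' n, (1 - q ^ (n + 1))
  have hP := tprod_one_sub_pow_succ_ne_zero hq
  have hshift (s : ℤ) : Tendsto (fun m : ℕ ↦ qPoch q (s + m).toNat) atTop (𝓝 P) :=
    (tendsto_qPoch hq).comp (tendsto_atTop_atTop.2 fun b ↦ ⟨b + s.natAbs, fun a ha ↦ by omega⟩)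
  have hlim := ((tendsto_qPoch hq).comp (tendsto_id.const_mul_atTop' two_pos)).div
    ((hshift r).mul (hshift (-r))) (mul_ne_zero hP hP)
  rw [div_mul_cancel_left₀ hP] at hlim
  refine hlim.congr' ?_
  filter_upwards [eventually_ge_atTop r.natAbs] with m hm
  have hsum : (r + m).toNat + (-r + m).toNat = 2 * m := by omega
  simp only [Pi.div_apply, Function.comp_apply, id, ← hsum, qBinom_add_left_eq_div hq]

end Analytic

section TripleProduct

open Complex Filter Topology Real

lemma norm_cexp_pi_mul_I_mul_sq_lt_one {τ : ℂ} (hτ : 0 < τ.im) : ‖cexp (π * I * τ) ^ 2‖ < 1 := by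
  rw [norm_pow]
  refine pow_lt_one₀ (norm_nonneg _) ?_ two_ne_zero
  rw [norm_exp, Real.exp_lt_one_iff]
  simpa [mul_re] using mul_pos Real.pi_pos hτ

lemma jacobiTheta₂_term_eq_zpow_mul_zpow (r : ℤ) (w τ : ℂ) :
    jacobiTheta₂_term r w τ = cexp (π * I * τ) ^ (r ^ 2) * cexp (2 * π * I * w) ^ r := by
  rw [← exp_int_mul, ← exp_int_mul, ← Complex.exp_add, jacobiTheta₂_term]
  congr 1
  push_cast
  ring

lemma tendsto_prod_range_one_add_mul_pow_odd_mul_inv {τ : ℂ} (hτ : 0 < τ.im) (w : ℂ) :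
    Tendsto (fun m ↦ ∏ k ∈ range m,
        ((1 + cexp (2 * π * I * w) * cexp (π * I * τ) ^ (2 * k + 1)) *
          (1 + (cexp (2 * π * I * w))⁻¹ * cexp (π * I * τ) ^ (2 * k + 1)))) atTop
      (𝓝 ((∏' n, (1 - (cexp (π * I * τ) ^ 2) ^ (n + 1)))⁻¹ * jacobiTheta₂ w τ)) := by
  set p := cexp (π * I * τ)
  set z := cexp (2 * π * I * w)
  have hq : ‖p ^ 2‖ < 1 := norm_cexp_pi_mul_I_mul_sq_lt_one hτ
  obtain ⟨C, hC⟩ := exists_norm_qBinom_le hq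
  set f : ℕ → ℤ → ℂ := fun m ↦ (Icc (-(m : ℤ)) m : Set ℤ).indicator
    fun r ↦ qBinom (p ^ 2) (2 * m) (r + m).toNat * jacobiTheta₂_term r w τ
  have hfin (m : ℕ) : ∏ k ∈ range m, ((1 + z * p ^ (2 * k + 1)) * (1 + z⁻¹ * p ^ (2 * k + 1))) =
      ∑' r, f m r := by
    simp only [f, ← sum_eq_tsum_indicator, jacobiTheta₂_term_eq_zpow_mul_zpow]
    exact prod_one_add_mul_pow_odd_mul_inv_eq_sum (Complex.exp_ne_zero _) (Complex.exp_ne_zero _) m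
  have hlim (r : ℤ) : Tendsto (f · r) atTop
      (𝓝 ((∏' n, (1 - (p ^ 2) ^ (n + 1)))⁻¹ * jacobiTheta₂_term r w τ)) := by
    refine ((tendsto_qBinom_two_mul hq r).mul_const _).congr' ?_
    filter_upwards [eventually_ge_atTop r.natAbs] with m hm
    simp only [f]
    rw [Set.indicator_of_mem (by rw [mem_coe, mem_Icc]; omega)]
  have hsum : Summable fun r ↦ C * ‖jacobiTheta₂_term r w τ‖ :=
    (summable_norm_iff.2 ((summable_jacobiTheta₂_term_iff w τ).2 hτ)).mul_left C
  rw [jacobiTheta₂, ← tsum_mul_left]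
  refine (tendsto_tsum_of_dominated_convergence hsum hlim (Eventually.of_forall fun m r ↦ ?_)).congr
    fun m ↦ (hfin m).symm
  exact (norm_indicator_le_norm_self _ _).trans ((norm_mul_le _ _).trans
    (mul_le_mul_of_nonneg_right (hC _ _) (norm_nonneg _)))

/-- The Jacobi triple product. -/
theorem jacobiTheta₂_eq_tprod {τ : ℂ} (hτ : 0 < τ.im) (w : ℂ) :
    jacobiTheta₂ w τ = ∏' k : ℕ, (1 - (cexp (π * I * τ) ^ 2) ^ (k + 1)) *
      (1 + cexp (2 * π * I * w) * cexp (π * I * τ) ^ (2 * k + 1)) *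
      (1 + (cexp (2 * π * I * w))⁻¹ * cexp (π * I * τ) ^ (2 * k + 1)) := by
  set p := cexp (π * I * τ)
  set z := cexp (2 * π * I * w)
  have hq : ‖p ^ 2‖ < 1 := norm_cexp_pi_mul_I_mul_sq_lt_one hτ
  have hodd (c : ℂ) (k : ℕ) : c * p * (p ^ 2) ^ k = c * p ^ (2 * k + 1) := by ring
  have hpair : Multipliable fun k : ℕ ↦ (1 + z * p ^ (2 * k + 1)) * (1 + z⁻¹ * p ^ (2 * k + 1)) :=
    ((multipliable_one_add_mul_pow_s8 hq (z * p)).mul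
      (multipliable_one_add_mul_pow_s8 hq (z⁻¹ * p))).congr fun k ↦ by simp only [hodd]
  have hlim := tendsto_nhds_unique hpair.hasProd.tendsto_prod_nat
    (tendsto_prod_range_one_add_mul_pow_odd_mul_inv hτ w)
  simp_rw [mul_assoc]
  rw [(ModularForm.multipliable_one_sub_pow hq).tprod_mul hpair, hlim,
    mul_inv_cancel_left₀ (tprod_one_sub_pow_succ_ne_zero hq)]

end TripleProduct

section Theta

open Complex Real

lemma jTheta_eq_jacobiTheta₂ {τ : ℂ} (hτ : 0 < τ.im) (v : ℂ) :
    jTheta v τ = -I * cexp (π * I * τ / 4 + π * I * v) * jacobiTheta₂ (v + (1 + τ) / 2) τ := by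
  have hE' : cexp (2 * π * I * v) = cexp (π * I * v) ^ 2 := by
    rw [← Complex.exp_nat_mul]; push_cast; ring_nf
  set p := cexp (π * I * τ)
  set E := cexp (2 * π * I * v)
  have hp : p ≠ 0 := Complex.exp_ne_zero _
  have hq : ‖p ^ 2‖ < 1 := norm_cexp_pi_mul_I_mul_sq_lt_one hτ
  have hz : cexp (2 * π * I * (v + (1 + τ) / 2)) = -E * p := by
    rw [show 2 * π * I * (v + (1 + τ) / 2) = 2 * π * I * v + π * I + π * I * τ by ring,
      Complex.exp_add, Complex.exp_add, exp_pi_mul_I]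
    ring
  have hqpow (n : ℕ) : qpow τ (n + 1) = (p ^ 2) ^ (n + 1) := by
    rw [qpow, ← pow_mul, ← Complex.exp_nat_mul]
    push_cast
    ring_nf
  have hmult (c : ℂ) : Multipliable fun k : ℕ ↦ 1 - c * (p ^ 2) ^ (k + 1) :=
    (multipliable_one_add_mul_pow_s8 hq (-c * p ^ 2)).congr fun k ↦ by ring
  have hsin : 2 * Complex.sin (π * v) = -I * cexp (π * I * v) * (1 - E⁻¹) := by
    rw [Complex.sin, hE', show π * v * I = π * I * v by ring,
      show -(π * v) * I = -(π * I * v) by ring, Complex.exp_neg]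
    field_simp
    ring
  have hq8 : qpow τ (1 / 8) = cexp (π * I * τ / 4) := by rw [qpow]; ring_nf
  have htriple : jacobiTheta₂ (v + (1 + τ) / 2) τ = ∏' k : ℕ, (1 - (p ^ 2) ^ (k + 1)) *
      (1 - E * (p ^ 2) ^ (k + 1)) * (1 - E⁻¹ * (p ^ 2) ^ k) := by
    rw [jacobiTheta₂_eq_tprod hτ, hz]
    refine tprod_congr fun k ↦ ?_
    have hodd : p ^ (2 * k + 1) = p * (p ^ 2) ^ k := by ring
    rw [hodd, mul_inv, inv_neg, mul_assoc _ p⁻¹, inv_mul_cancel_left₀ hp]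
    ring
  have hshift := tprod_mul_mul_eq_mul_tprod_shift (ModularForm.multipliable_one_sub_pow hq)
    (hmult E) (h := fun k ↦ 1 - E⁻¹ * (p ^ 2) ^ k) (hmult E⁻¹)
  rw [htriple, hshift, jTheta, Complex.exp_neg, hq8, Complex.exp_add]
  simp only [hqpow, pow_zero, mul_one]
  linear_combination (cexp (π * I * τ / 4) * ∏' k : ℕ, (1 - (p ^ 2) ^ (k + 1)) *
    (1 - E * (p ^ 2) ^ (k + 1)) * (1 - E⁻¹ * (p ^ 2) ^ (k + 1))) * hsin

lemma jacobiTheta₂_div_neg_one_div (z : ℂ) {τ : ℂ} (hτ : τ ≠ 0) :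
    jacobiTheta₂ (z / τ) (-1 / τ) =
      (-I * τ) ^ (1 / 2 : ℂ) * cexp (π * I * z ^ 2 / τ) * jacobiTheta₂ z τ := by
  have hc : (-I * τ) ^ (1 / 2 : ℂ) ≠ 0 :=
    cpow_ne_zero_iff.2 (Or.inl (mul_ne_zero (neg_ne_zero.2 I_ne_zero) hτ))
  rw [jacobiTheta₂_functional_equation z τ]
  calc jacobiTheta₂ (z / τ) (-1 / τ)
      = ((-I * τ) ^ (1 / 2 : ℂ) * (1 / (-I * τ) ^ (1 / 2 : ℂ))) *
          cexp (π * I * z ^ 2 / τ + -π * I * z ^ 2 / τ) * jacobiTheta₂ (z / τ) (-1 / τ) := by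
        rw [mul_one_div_cancel hc, show π * I * z ^ 2 / τ + -π * I * z ^ 2 / τ = 0 by ring,
          Complex.exp_zero, one_mul, one_mul]
    _ = _ := by rw [Complex.exp_add]; ring

lemma exp_S_transformation_factor (t : ℂ) {τ : ℂ} (hτ : τ ≠ 0) :
    cexp (π * I * (-1 / τ) / 4 + π * I * (t / τ)) * cexp (π * I * (t + (τ - 1) / 2) ^ 2 / τ) =
      1 / I * cexp (π * I * t ^ 2 / τ) * cexp (π * I * τ / 4 + π * I * t) := by
  rw [one_div, inv_I, ← exp_neg_pi_div_two_mul_I, ← Complex.exp_add, ← Complex.exp_add,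
    ← Complex.exp_add]
  congr 1
  field_simp
  ring

end Theta

theorem theta_S_transformation (τ : ℂ) (hτ : 0 < τ.im) (t : ℂ) :
    jTheta (t / τ) (-1 / τ) =
      (1 / Complex.I) * (τ / Complex.I) ^ ((1 : ℂ) / 2) *
        Complex.exp ((Real.pi : ℂ) * Complex.I * t ^ 2 / τ) * jTheta t τ := by
  have hτ0 : τ ≠ 0 := fun h ↦ by simp [h] at hτ
  have hτ' : 0 < (-1 / τ).im := by
    rw [neg_div, Complex.neg_im, one_div, Complex.inv_im, neg_div, neg_neg]
    exact div_pos hτ (Complex.normSq_pos.2 hτ0)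
  have harg : t / τ + (1 + -1 / τ) / 2 = (t + (τ - 1) / 2) / τ := by field_simp; ring
  have hper : t + (1 + τ) / 2 = t + (τ - 1) / 2 + 1 := by ring
  have hτI : τ / Complex.I = -Complex.I * τ := by rw [div_eq_mul_inv, Complex.inv_I]; ring
  rw [jTheta_eq_jacobiTheta₂ hτ', jTheta_eq_jacobiTheta₂ hτ, harg, hper, jacobiTheta₂_add_left,
    jacobiTheta₂_div_neg_one_div _ hτ0, hτI]
  linear_combination (-Complex.I * (-Complex.I * τ) ^ (1 / 2 : ℂ) *
    jacobiTheta₂ (t + (τ - 1) / 2) τ) * exp_S_transformation_factor t hτ0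
end
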